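/- arXiv:2304.00853 — 2 statements merged into one kernel-verified Lean document; each statement's English description precedes it below -/
import Mathlib

section
/- Let A = {a_1 < ... < a_n} ⊂ ℝ, let D be its set of consecutive differences, and suppose D' ⊆ D and K ≥ 1 are such that |A_d| ≥ K for all d ∈ D', where A_d = {a_i ∈ A : a_{i+1} - a_i = d}. Split D' = D'_big ⊔ D'_small with every element of D'_big larger than every element of D'_small and |D'_small| - 1 ≤ |D'_big| ≤ |D'_small|. Then for each a_i with a_{i+1} - a_i ∈ D'_big, the translate a_i + D'_small is contained in the open interval (a_i, a_{i+1}), and consequently |A + A - A| ≥ (1/4)|D'|² K. -/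
/-!
The gaps of `A` are positive, so a small gap `d ∈ D'_small` is smaller than every big gap: for
each of the at least `|D'_big| K` indices `i` with a big gap, `a i + d` falls strictly inside
`(a i, a (i+1))`. These open intervals are pairwise disjoint and miss `A`, so the points
`a i + d = a i + a (j+1) - a j` are pairwise distinct elements of `(A + A - A) \ A`. Hence
`|A + A - A| ≥ |D'_big| |D'_small| K + n`, and `|D'_small| - 1 ≤ |D'_big| ≤ |D'_small|` turns
`|D'_big| |D'_small|` into `|D'|² / 4` up to an error `K / 4 ≤ n`.
-/

open Finset Pointwise

theorem Finset.card_mul_le_card_filter_mem {ι β : Type*} [DecidableEq β] (s : Finset ι)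
    (g : ι → β) {t : Finset β} {K : ℕ} (h : ∀ b ∈ t, K ≤ #{i ∈ s | g i = b}) :
    #t * K ≤ #{i ∈ s | g i ∈ t} :=
  calc #t * K = ∑ _b ∈ t, K := by rw [sum_const, smul_eq_mul]
    _ ≤ ∑ b ∈ t, #{i ∈ s | g i = b} := sum_le_sum h
    _ = _ := sum_card_fiberwise_eq_card_filter s t g

-- `(b + s)² = 4bs + (s - b)²` and `0 ≤ s - b ≤ 1`.
theorem quarter_sq_add_mul_le {b s K N : ℝ} (hsb : s - 1 ≤ b) (hbs : b ≤ s) (hK : 0 ≤ K)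
    (hKN : K ≤ N) : 1 / 4 * (b + s) ^ 2 * K ≤ b * s * K + N := by
  have hsq : (s - b) ^ 2 ≤ 1 := by nlinarith
  nlinarith [mul_le_mul_of_nonneg_right hsq hK]

section Squeeze

variable {α : Type*} [LinearOrder α] {a : ℕ → α} {n : ℕ}

theorem StrictMonoOn.eq_of_mem_Ioo_succ (ha : StrictMonoOn a (Set.Iio n)) {i j : ℕ}
    (hi : i + 1 < n) (hj : j + 1 < n) {x : α} (hxi : x ∈ Set.Ioo (a i) (a (i + 1)))
    (hxj : x ∈ Set.Ioo (a j) (a (j + 1))) : i = j := by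
  have hij : i < j + 1 := (ha.lt_iff_lt (by simp; omega) (by simpa)).1 (hxi.1.trans hxj.2)
  have hji : j < i + 1 := (ha.lt_iff_lt (by simp; omega) (by simpa)).1 (hxj.1.trans hxi.2)
  omega

theorem StrictMonoOn.ne_of_mem_Ioo_succ (ha : StrictMonoOn a (Set.Iio n)) {i j : ℕ}
    (hi : i + 1 < n) (hj : j < n) {x : α} (hx : x ∈ Set.Ioo (a i) (a (i + 1))) : a j ≠ x := by
  rintro rfl
  have hij : i < j := (ha.lt_iff_lt (by simp; omega) (by simpa)).1 hx.1
  have hji : j < i + 1 := (ha.lt_iff_lt (by simpa) (by simpa)).1 hx.2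
  omega

end Squeeze

section SumSet

variable {α : Type*} [AddCommGroup α] [DecidableEq α]

theorem Finset.subset_add_sub_self (A : Finset α) : A ⊆ A + A - A :=
  fun x hx => by simpa using sub_mem_sub (add_mem_add hx hx) hx

variable [LinearOrder α] {a : ℕ → α} {n : ℕ}

theorem StrictMonoOn.card_mul_card_add_le_card_add_sub (ha : StrictMonoOn a (Set.Iio n))
    {I : Finset ℕ} {S : Finset α} (hI : I ⊆ range (n - 1))
    (hS : S ⊆ (range (n - 1)).image (fun i => a (i + 1) - a i))
    (hsq : ∀ i ∈ I, ∀ d ∈ S, a i + d ∈ Set.Ioo (a i) (a (i + 1))) :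
    #I * #S + n ≤ #((range n).image a + (range n).image a - (range n).image a) := by
  set A := (range n).image a
  set T := (I ×ˢ S).image (fun p => a p.1 + p.2)
  have hIn : ∀ i ∈ I, i + 1 < n := fun i hi => by have := mem_range.1 (hI hi); omega
  have hT : #T = #I * #S := by
    rw [card_image_of_injOn, card_product]
    rintro ⟨i, d⟩ hid ⟨j, e⟩ hje h
    simp only [coe_product, Set.mem_prod, mem_coe] at hid hje h
    have hij : i = j := ha.eq_of_mem_Ioo_succ (hIn i hid.1) (hIn j hje.1)
      (hsq i hid.1 d hid.2) (h ▸ hsq j hje.1 e hje.2)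
    subst hij
    simpa using h
  have hA : #A = n := by rw [card_image_of_injOn (ha.injOn.mono (by simp)), card_range]
  have hTA : Disjoint T A := by
    refine disjoint_left.2 ?_
    simp only [T, A, mem_image, mem_product, mem_range]
    rintro _ ⟨⟨i, d⟩, ⟨hi, hd⟩, rfl⟩ ⟨j, hj, hjx⟩
    exact ha.ne_of_mem_Ioo_succ (hIn i hi) hj (hsq i hi d hd) hjx
  have hTsub : T ⊆ A + A - A := by
    simp only [T, subset_iff, mem_image, mem_product]
    rintro _ ⟨⟨i, d⟩, ⟨hi, hd⟩, rfl⟩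
    obtain ⟨j, hj, rfl⟩ := mem_image.1 (hS hd)
    have hj : j + 1 < n := by have := mem_range.1 hj; omega
    have hi := hIn i hi
    rw [← add_sub_assoc]
    exact sub_mem_sub (add_mem_add (mem_image_of_mem a (mem_range.2 (by omega)))
      (mem_image_of_mem a (mem_range.2 hj))) (mem_image_of_mem a (mem_range.2 (by omega)))
  calc #I * #S + n = #(T ∪ A) := by rw [card_union_of_disjoint hTA, hT, hA]
    _ ≤ _ := card_le_card (union_subset hTsub A.subset_add_sub_self)

end SumSet

theorem stmt1_general (n : ℕ) (a : ℕ → ℝ)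
    (ha : ∀ i j : ℕ, i < j → j < n → a i < a j)
    (K : ℕ)
    (D' Dbig Dsmall : Finset ℝ)
    (hD' : D' ⊆ (Finset.range (n - 1)).image (fun i => a (i + 1) - a i))
    (hAd : ∀ d ∈ D',
      K ≤ (((Finset.range (n - 1)).filter (fun i => a (i + 1) - a i = d)).image a).card)
    (hsplit : D' = Dbig ∪ Dsmall) (hdisj : Disjoint Dbig Dsmall)
    (horder : ∀ x ∈ Dbig, ∀ y ∈ Dsmall, y < x)
    (hsize1 : (Dsmall.card : ℤ) - 1 ≤ Dbig.card) (hsize2 : Dbig.card ≤ Dsmall.card) :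
    (∀ i < n - 1, a (i + 1) - a i ∈ Dbig →
      ∀ d ∈ Dsmall, a i + d ∈ Set.Ioo (a i) (a (i + 1))) ∧
    ((1 : ℝ) / 4) * (D'.card : ℝ) ^ 2 * K ≤
      (((Finset.range n).image a + (Finset.range n).image a
        - (Finset.range n).image a).card : ℝ) := by
  have hmono : StrictMonoOn a (Set.Iio n) := fun i _ j hj hij => ha i j hij hj
  have hsmall : Dsmall ⊆ (range (n - 1)).image (fun i => a (i + 1) - a i) :=
    (hsplit ▸ subset_union_right).trans hD'
  have hsqueeze : ∀ i < n - 1, a (i + 1) - a i ∈ Dbig →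
      ∀ d ∈ Dsmall, a i + d ∈ Set.Ioo (a i) (a (i + 1)) := by
    intro i _ hi d hd
    obtain ⟨j, hj, rfl⟩ := mem_image.1 (hsmall hd)
    have hgap := ha j (j + 1) j.lt_succ_self (by have := mem_range.1 hj; omega)
    constructor <;> linarith [horder _ hi _ hd]
  refine ⟨hsqueeze, ?_⟩
  obtain rfl | ⟨d₀, hd₀⟩ := D'.eq_empty_or_nonempty
  · simp
  have hKn : K ≤ n :=
    (hAd d₀ hd₀).trans (card_image_le.trans ((card_filter_le _ _).trans (by simp)))
  have hI : #Dbig * K ≤ #{i ∈ range (n - 1) | a (i + 1) - a i ∈ Dbig} :=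
    card_mul_le_card_filter_mem _ _ fun d hd =>
      (hAd d (hsplit ▸ mem_union_left _ hd)).trans card_image_le
  have hsum := hmono.card_mul_card_add_le_card_add_sub (filter_subset _ _) hsmall
    fun i hi => hsqueeze i (mem_range.1 (mem_filter.1 hi).1) (mem_filter.1 hi).2
  have hD'card : #D' = #Dbig + #Dsmall := hsplit ▸ card_union_of_disjoint hdisj
  calc (1 : ℝ) / 4 * #D' ^ 2 * K = 1 / 4 * ((#Dbig : ℝ) + #Dsmall) ^ 2 * K := by
        rw [hD'card, Nat.cast_add]
    _ ≤ (#Dbig : ℝ) * #Dsmall * K + n := quarter_sq_add_mul_le (by exact_mod_cast hsize1)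
        (by exact_mod_cast hsize2) K.cast_nonneg (by exact_mod_cast hKn)
    _ = ((#Dbig * K * #Dsmall + n : ℕ) : ℝ) := by push_cast; ring
    _ ≤ _ := Nat.cast_le.2 ((Nat.add_le_add_right (Nat.mul_le_mul_right _ hI) n).trans hsum)

/-- Squeezing lemma: with `A = {a 0 < ... < a (n-1)}`, `D` the consecutive differences,
`A_d` the left endpoints of gaps of length `d`, `D' ⊆ D` with `|A_d| ≥ K` for `d ∈ D'`,
and `D' = D'_big ⊔ D'_small` with every element of `D'_big` larger than every element of
`D'_small` and `|D'_small| - 1 ≤ |D'_big| ≤ |D'_small|`: each translate `a i + D'_small`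
with gap `a (i+1) - a i ∈ D'_big` lies in `(a i, a (i+1))`, and `|A+A-A| ≥ (1/4)|D'|² K`. -/
theorem stmt1 (n : ℕ) (hn : 2 ≤ n) (a : ℕ → ℝ)
    (ha : ∀ i j : ℕ, i < j → j < n → a i < a j)
    (K : ℕ) (hK : 1 ≤ K)
    (D' Dbig Dsmall : Finset ℝ)
    (hD' : D' ⊆ (Finset.range (n - 1)).image (fun i => a (i + 1) - a i))
    (hAd : ∀ d ∈ D',
      K ≤ (((Finset.range (n - 1)).filter (fun i => a (i + 1) - a i = d)).image a).card)
    (hsplit : D' = Dbig ∪ Dsmall) (hdisj : Disjoint Dbig Dsmall)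
    (horder : ∀ x ∈ Dbig, ∀ y ∈ Dsmall, y < x)
    (hsize1 : (Dsmall.card : ℤ) - 1 ≤ Dbig.card) (hsize2 : Dbig.card ≤ Dsmall.card) :
    (∀ i < n - 1, a (i + 1) - a i ∈ Dbig →
      ∀ d ∈ Dsmall, a i + d ∈ Set.Ioo (a i) (a (i + 1))) ∧
    ((1 : ℝ) / 4) * (D'.card : ℝ) ^ 2 * K ≤
      (((Finset.range n).image a + (Finset.range n).image a
        - (Finset.range n).image a).card : ℝ) :=
  stmt1_general n a ha K D' Dbig Dsmall hD' hAd hsplit hdisj horder hsize1 hsize2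
end

section
/- Let X and Y be finite nonempty sets in an abelian group, and let k, l be non-negative integers with k + l > 1. Then |kX - lX| ≤ |X + Y|^{k+l} / |Y|^{k+l - 1}. -/
open Finset Pointwise

/-- The `k`-fold sumset of a finite set in an abelian group. -/
def foldSum {G : Type*} [AddCommGroup G] [DecidableEq G] : ℕ → Finset G → Finset G
  | 0, _ => {0}
  | n + 1, A => foldSum n A + A

lemma foldSum_eq_nsmul {G : Type*} [AddCommGroup G] [DecidableEq G] (k : ℕ) (X : Finset G) :
    foldSum k X = k • X := by
  induction k with
  | zero => rfl
  | succ n ih => rw [foldSum, ih, succ_nsmul]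

lemma card_nsmul_sub_nsmul_le_real {G : Type*} [AddCommGroup G] [DecidableEq G]
    {Y : Finset G} (hY : Y.Nonempty) (X : Finset G) (k l : ℕ) :
    (#(k • X - l • X) : ℝ) ≤ ((#(X + Y) : ℝ) / #Y) ^ (k + l) * #Y := by
  have h := pluennecke_ruzsa_inequality_nsmul_sub_nsmul_add hY X k l
  rw [add_comm Y X] at h
  have h' := (NNRat.cast_le (K := ℝ)).mpr h
  push_cast at h'
  exact h'

theorem stmt11_general {G : Type*} [AddCommGroup G] [DecidableEq G]
    (X Y : Finset G) (hY : Y.Nonempty)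
    (k l : ℕ) (hkl : 1 < k + l) :
    ((foldSum k X - foldSum l X).card : ℝ) ≤
      ((X + Y).card : ℝ) ^ (k + l) / (Y.card : ℝ) ^ (k + l - 1) := by
  obtain ⟨n, hn⟩ : ∃ n, k + l = n + 1 := ⟨k + l - 1, by omega⟩
  have hY0 : (#Y : ℝ) ≠ 0 := by exact_mod_cast hY.card_pos.ne'
  rw [foldSum_eq_nsmul, foldSum_eq_nsmul, hn, Nat.add_sub_cancel]
  calc (#(k • X - l • X) : ℝ)
      ≤ ((#(X + Y) : ℝ) / #Y) ^ (n + 1) * #Y := hn ▸ card_nsmul_sub_nsmul_le_real hY X k l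
    _ = (#(X + Y) : ℝ) ^ (n + 1) / (#Y : ℝ) ^ n := by
        rw [div_pow, pow_succ (#Y : ℝ)]
        field_simp

/-- Plünnecke–Ruzsa: for finite nonempty `X, Y` in an abelian group and `k + l > 1`,
`|kX - lX| ≤ |X + Y|^{k+l} / |Y|^{k+l-1}`. -/
theorem stmt11 {G : Type*} [AddCommGroup G] [DecidableEq G]
    (X Y : Finset G) (hX : X.Nonempty) (hY : Y.Nonempty)
    (k l : ℕ) (hkl : 1 < k + l) :
    ((foldSum k X - foldSum l X).card : ℝ) ≤
      ((X + Y).card : ℝ) ^ (k + l) / (Y.card : ℝ) ^ (k + l - 1) :=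
  stmt11_general X Y hY k l hkl
end
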